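/- Suppose n is even and p ≥ 1 satisfies p ≡ n+1 (mod 2(n+1)). Then (1 + φ^p)(x) = 2x for every x ∈ ℤ^n, so Im(1 + φ^p) = 2ℤ^n, and hence G_{n,p} = ℤ^n / Im(1 + φ^p) is isomorphic to (ℤ/2ℤ)^n. (Such p is necessarily odd since n+1 is odd.) -/

import Mathlib

/-- The Coxeter transformation of the linearly oriented Dynkin quiver `A_n`, acting on
`ℤ^n = K_0(D^b(mod K A_n))` in the basis of classes of simple modules:
`φ(e_i) = e_{i+1}` for `1 ≤ i ≤ n-1` and `φ(e_n) = -(e_1 + ⋯ + e_n)`.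
(Here the basis vector `e_i` is `Pi.single ⟨i-1, _⟩ 1`.) -/
noncomputable def phiA (n : ℕ) : Module.End ℤ (Fin n → ℤ) :=
  (Pi.basisFun ℤ (Fin n)).constr ℤ (fun i =>
    if h : (i : ℕ) + 1 < n then Pi.single (⟨(i : ℕ) + 1, h⟩ : Fin n) 1 else fun _ => -1)

lemma phiA_single (n : ℕ) (i : Fin n) :
    phiA n (Pi.single i 1) =
      if h : (i : ℕ) + 1 < n then Pi.single (⟨(i : ℕ) + 1, h⟩ : Fin n) 1
      else fun _ => -1 := by
  have := Module.Basis.constr_basis (Pi.basisFun ℤ (Fin n)) ℤ (fun i =>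
    if h : (i : ℕ) + 1 < n then Pi.single (⟨(i : ℕ) + 1, h⟩ : Fin n) 1 else fun _ => -1) i
  rwa [Pi.basisFun_apply] at this

lemma sum_single_succ (m : ℕ) :
    (∑ i : Fin m, (Pi.single (i.succ) (1 : ℤ) : Fin (m + 1) → ℤ)) =
      fun j : Fin (m + 1) => if j = 0 then 0 else (1 : ℤ) := by
  funext j
  rw [Finset.sum_apply]
  simp only [Pi.single_apply]
  induction j using Fin.cases with
  | zero =>
      rw [Finset.sum_eq_zero, if_pos rfl]
      intro i _
      rw [if_neg (by exact fun h => (Fin.succ_ne_zero i) h.symm)]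
  | succ k =>
      rw [if_neg (Fin.succ_ne_zero k)]
      rw [Finset.sum_eq_single k]
      · rw [if_pos rfl]
      · intro i _ hi
        rw [if_neg (fun h => hi (Fin.succ_injective m h.symm))]
      · intro h; exact absurd (Finset.mem_univ k) h

lemma phiA_ones (n : ℕ) (hn1 : 1 ≤ n) :
    phiA n (fun _ => (-1 : ℤ)) = Pi.single (⟨0, hn1⟩ : Fin n) 1 := by
  obtain ⟨m, rfl⟩ : ∃ m, n = m + 1 := ⟨n - 1, by omega⟩
  have hsum : (fun _ => (-1 : ℤ)) = -(∑ i : Fin (m + 1), Pi.single i (1 : ℤ)) := by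
    funext j
    simp [Finset.sum_apply, Pi.single_apply]
  rw [hsum, map_neg, map_sum]
  simp only [phiA_single]
  rw [Fin.sum_univ_castSucc]
  have h1 : ∀ i : Fin m,
      (if h : ((i.castSucc : Fin (m + 1)) : ℕ) + 1 < m + 1 then
        Pi.single (⟨((i.castSucc : Fin (m + 1)) : ℕ) + 1, h⟩ : Fin (m + 1)) (1 : ℤ)
      else fun _ => -1) = Pi.single (i.succ) (1 : ℤ) := by
    intro i
    rw [dif_pos (by simp)]
    congr 1
  have h2 : (if h : ((Fin.last m : Fin (m + 1)) : ℕ) + 1 < m + 1 then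
        Pi.single (⟨((Fin.last m : Fin (m + 1)) : ℕ) + 1, h⟩ : Fin (m + 1)) (1 : ℤ)
      else fun _ => -1) = fun _ => (-1 : ℤ) := by
    rw [dif_neg (by simp)]
  rw [h2, Finset.sum_congr rfl (fun i _ => h1 i), sum_single_succ]
  funext j
  simp only [Pi.neg_apply, Pi.add_apply, Pi.single_apply]
  by_cases hj : j = 0
  · subst hj
    rw [if_pos rfl, if_pos (by exact Fin.ext rfl)]
    ring
  · rw [if_neg hj, if_neg (fun h => hj (by rw [h]; exact Fin.ext rfl))]
    ring

lemma phiA_pow_single (n : ℕ) (hn1 : 1 ≤ n) :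
    ∀ k (h : k < n), ((phiA n) ^ k) (Pi.single (⟨0, hn1⟩ : Fin n) 1)
      = Pi.single (⟨k, h⟩ : Fin n) 1 := by
  intro k
  induction k with
  | zero => intro h; simp
  | succ k ih =>
      intro h
      rw [pow_succ', Module.End.mul_apply, ih (by omega), phiA_single,
        dif_pos (by exact h)]

lemma phiA_pow_n (n : ℕ) (hn1 : 1 ≤ n) :
    ((phiA n) ^ n) (Pi.single (⟨0, hn1⟩ : Fin n) 1) = fun _ => (-1 : ℤ) := by
  obtain ⟨m, rfl⟩ : ∃ m, n = m + 1 := ⟨n - 1, by omega⟩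
  rw [pow_succ', Module.End.mul_apply, phiA_pow_single (m + 1) hn1 m (by omega),
    phiA_single, dif_neg (by simp)]

lemma phiA_pow_succ_n (n : ℕ) (hn1 : 1 ≤ n) : (phiA n) ^ (n + 1) = 1 := by
  have base : ((phiA n) ^ (n + 1)) (Pi.single (⟨0, hn1⟩ : Fin n) 1)
      = Pi.single (⟨0, hn1⟩ : Fin n) 1 := by
    rw [pow_succ', Module.End.mul_apply, phiA_pow_n n hn1, phiA_ones n hn1]
  apply Module.Basis.ext (Pi.basisFun ℤ (Fin n))
  intro i
  rw [Pi.basisFun_apply, Module.End.one_apply]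
  have hi : Pi.single i (1 : ℤ) = ((phiA n) ^ (i : ℕ)) (Pi.single (⟨0, hn1⟩ : Fin n) 1) := by
    rw [phiA_pow_single n hn1 i i.isLt]
  rw [hi, ← Module.End.mul_apply, ← pow_add, add_comm, pow_add, Module.End.mul_apply, base]

open Pointwise in
theorem stmt11 (n p : ℕ) (hn : Even n) (hn1 : 1 ≤ n) (hp : 1 ≤ p)
    (hp1 : p ≡ n + 1 [MOD 2 * (n + 1)]) :
    Odd p ∧
    (∀ x : Fin n → ℤ, ((1 : Module.End ℤ (Fin n → ℤ)) + (phiA n) ^ p) x = 2 • x) ∧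
    LinearMap.range ((1 : Module.End ℤ (Fin n → ℤ)) + (phiA n) ^ p)
      = (2 : ℤ) • (⊤ : Submodule ℤ (Fin n → ℤ)) ∧
    Nonempty
      (((Fin n → ℤ) ⧸ LinearMap.range
          ((1 : Module.End ℤ (Fin n → ℤ)) + (phiA n) ^ p)) ≃+ (Fin n → ZMod 2)) := by
  -- p = (n+1) * (2m+1)
  have hmod : p % (2 * (n + 1)) = n + 1 := by
    have := hp1
    unfold Nat.ModEq at this
    rw [this, Nat.mod_eq_of_lt (by omega)]
  obtain ⟨m, hm⟩ : ∃ m, p = (n + 1) * (2 * m + 1) := by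
    obtain ⟨q, hq⟩ : ∃ q, p = 2 * (n + 1) * q + (n + 1) := by
      refine ⟨p / (2 * (n + 1)), ?_⟩
      have := Nat.div_add_mod p (2 * (n + 1))
      omega
    exact ⟨q, by rw [hq]; ring⟩
  have hodd : Odd p := by
    rw [hm]
    exact (Even.add_one hn).mul (odd_two_mul_add_one m)
  have hpow : (phiA n) ^ p = 1 := by
    rw [hm, pow_mul, phiA_pow_succ_n n hn1, one_pow]
  have happ : ∀ x : Fin n → ℤ,
      ((1 : Module.End ℤ (Fin n → ℤ)) + (phiA n) ^ p) x = 2 • x := by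
    intro x
    rw [hpow]
    simp [two_smul]
  refine ⟨hodd, happ, ?_, ?_⟩
  · apply le_antisymm
    · rintro x ⟨y, rfl⟩
      rw [happ]
      exact Submodule.smul_mem_pointwise_smul y 2 ⊤ trivial
    · intro x hx
      rw [← SetLike.mem_coe, Submodule.coe_pointwise_smul] at hx
      obtain ⟨y, -, rfl⟩ := hx
      exact ⟨y, happ y⟩
  · -- the quotient is (ZMod 2)^n
    have hrange : LinearMap.range ((1 : Module.End ℤ (Fin n → ℤ)) + (phiA n) ^ p)
        = Submodule.pi Set.univ (fun _ : Fin n => Ideal.span {((2 : ℕ) : ℤ)}) := by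
      apply le_antisymm
      · rintro x ⟨y, rfl⟩
        intro i _
        rw [happ]
        exact Ideal.mem_span_singleton.2 ⟨y i, by push_cast; simp [two_smul]⟩
      · intro x hx
        have hdvd : ∀ i, ∃ c, x i = 2 * c := by
          intro i
          have hxi := hx i (Set.mem_univ i)
          obtain ⟨c, hc⟩ := Ideal.mem_span_singleton.1 hxi
          exact ⟨c, by push_cast at hc; omega⟩
        choose c hc using hdvd
        refine ⟨c, ?_⟩
        rw [happ]
        funext i
        simp only [two_smul, Pi.add_apply]
        rw [hc i]; ring
    exact ⟨(Submodule.quotEquivOfEq _ _ hrange).toAddEquiv.trans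
      ((Submodule.quotientPi _).toAddEquiv.trans
        (AddEquiv.piCongrRight fun _ => (Int.quotientSpanNatEquivZMod 2).toAddEquiv))⟩
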